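/- Let q be a prime power with q - 1 = 4k + R for some R ∈ {1,...,5} and k ≥ 1. The mixed graph H_q has girth exactly 5: every mixed (directed/undirected) cycle has length at least 5, and a mixed cycle of length 5 exists. -/

import Mathlib

open Sum

/-- Vertices of `H_q` (= vertices of `G_q`): points `(x,y)` with `x ∈ F*`, points `P_m`,
lines `[m,b]` with `m ∈ F*`, and lines `L_x`. -/
abbrev Vtx (F : Type) [Field F] : Type := (Fˣ × F ⊕ Fˣ) ⊕ (Fˣ × F ⊕ Fˣ)

/-- Edges of `G_q ⊆ H_q`: `(x,y) ~ [m,b]` iff `y = m x + b`; `(x,y) ~ L_x`;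
`[m,b] ~ P_m`. -/
def HEdge {F : Type} [Field F] : Vtx F → Vtx F → Prop
  | inl (inl (x, y)), inr (inl (m, b)) => y = (m : F) * x + b
  | inr (inl (m, b)), inl (inl (x, y)) => y = (m : F) * x + b
  | inl (inl (x, _)), inr (inr x') => x = x'
  | inr (inr x'), inl (inl (x, _)) => x = x'
  | inl (inr m), inr (inl (m', _)) => m = m'
  | inr (inl (m', _)), inl (inr m) => m = m'
  | _, _ => False

/-- Arcs of `H_q`, given a primitive element `ξ` and jumps `i ∈ {1,…,k}`:
`((x,y),(xξ^i,y))`, `(L_x, L_{xξ^i})`, `([m,b],[m/ξ^i,b])`, `(P_m, P_{m/ξ^i})`. -/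
def HArc {F : Type} [Field F] (ξ : Fˣ) (k : ℕ) : Vtx F → Vtx F → Prop
  | inl (inl (x, y)), inl (inl (x', y')) =>
      y = y' ∧ ∃ i : ℕ, 1 ≤ i ∧ i ≤ k ∧ x' = x * ξ ^ i
  | inr (inr x), inr (inr x') => ∃ i : ℕ, 1 ≤ i ∧ i ≤ k ∧ x' = x * ξ ^ i
  | inr (inl (m, b)), inr (inl (m', b')) =>
      b = b' ∧ ∃ i : ℕ, 1 ≤ i ∧ i ≤ k ∧ m' = m * (ξ ^ i)⁻¹
  | inl (inr m), inl (inr m') => ∃ i : ℕ, 1 ≤ i ∧ i ≤ k ∧ m' = m * (ξ ^ i)⁻¹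
  | _, _ => False

/-- A mixed cycle of length `ℓ` in `H_q`: an injective cyclic sequence of vertices where
each step is an arc (traversed forwards) or an edge; a closed walk of length 2 using the
same edge twice is not a cycle. -/
def IsMixedCycle {F : Type} [Field F] (ξ : Fˣ) (k ℓ : ℕ) (f : ZMod ℓ → Vtx F) : Prop :=
  Function.Injective f ∧
    ∃ s : ZMod ℓ → Bool,
      (∀ t : ZMod ℓ, if s t then HArc ξ k (f t) (f (t + 1)) else HEdge (f t) (f (t + 1))) ∧
      (ℓ = 2 → s 0 = true ∨ s 1 = true)

/-!
The arcs of `H_q` are steps `u → σ_{ξ^i} u`, `1 ≤ i ≤ k`, of the automorphism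
`σ_a : (x,y) ↦ (xa,y), L_x ↦ L_{xa}, [m,b] ↦ [m/a,b], P_m ↦ P_{m/a}` of `G_q`.
Undoing the accumulated `σ` along a mixed cycle of length `ℓ ≤ 4` that has `a` arcs
leaves a walk in `G_q` from `σ_{ξ^N} v` to `v` of length `ℓ - a`, with `a ≤ N ≤ k a`.
This length is even because `G_q` is bipartite and `σ` preserves the sides. If `a = 0` the
cycle lies in `G_q`, which has no cycles of length 2 or 4. Otherwise `1 ≤ N ≤ 4k < q - 1`,
so `ξ^N ≠ 1`, while a walk of length 0 or 2 would make `v` a fixed point of `σ_{ξ^N}`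
or a common neighbour of `v` and `σ_{ξ^N} v`, both of which force `ξ^N = 1`.
A 5-cycle is `L_1 → L_ξ ~ (ξ,0) ~ [1,-ξ] ~ (1,1-ξ) ~ L_1`.
-/

section IncidenceGraph

variable {F : Type} [Field F]

namespace Vtx

def dilate (a : Fˣ) : Vtx F → Vtx F
  | inl (inl (x, y)) => inl (inl (x * a, y))
  | inl (inr m) => inl (inr (m * a⁻¹))
  | inr (inl (m, b)) => inr (inl (m * a⁻¹, b))
  | inr (inr x) => inr (inr (x * a))

@[simp]
lemma dilate_one (v : Vtx F) : dilate 1 v = v := by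
  rcases v with ((⟨x, y⟩ | m) | (⟨m, b⟩ | x)) <;> simp [dilate]

lemma dilate_mul (a b : Fˣ) (v : Vtx F) : dilate (a * b) v = dilate a (dilate b v) := by
  rcases v with ((⟨x, y⟩ | m) | (⟨m, b⟩ | x)) <;> simp [dilate, mul_comm, mul_left_comm]

@[simp]
lemma isLeft_dilate (a : Fˣ) (v : Vtx F) : (dilate a v).isLeft = v.isLeft := by
  rcases v with ((⟨x, y⟩ | m) | (⟨m, b⟩ | x)) <;> rfl

lemma eq_one_of_dilate_eq_self {a : Fˣ} {v : Vtx F} (h : dilate a v = v) : a = 1 := by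
  rcases v with ((⟨x, y⟩ | m) | (⟨m, b⟩ | x)) <;> simpa [dilate] using h

end Vtx

open Vtx

lemma HEdge.symm {u v : Vtx F} (h : HEdge u v) : HEdge v u := by
  rcases u with ((⟨x, y⟩ | m) | (⟨m, b⟩ | x)) <;>
    rcases v with ((⟨x', y'⟩ | m') | (⟨m', b'⟩ | x')) <;> simp_all [HEdge]

lemma HEdge.isLeft_ne {u v : Vtx F} (h : HEdge u v) : u.isLeft ≠ v.isLeft := by
  rcases u with ((⟨x, y⟩ | m) | (⟨m, b⟩ | x)) <;>
    rcases v with ((⟨x', y'⟩ | m') | (⟨m', b'⟩ | x')) <;> simp_all [HEdge]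

lemma HEdge.dilate {u v : Vtx F} (h : HEdge u v) (a : Fˣ) :
    HEdge (dilate a u) (dilate a v) := by
  rcases u with ((⟨x, y⟩ | m) | (⟨m, b⟩ | x)) <;>
    rcases v with ((⟨x', y'⟩ | m') | (⟨m', b'⟩ | x')) <;>
    simp_all [HEdge, Vtx.dilate] <;> field_simp

lemma HArc.exists_eq_dilate {ξ : Fˣ} {k : ℕ} {u v : Vtx F} (h : HArc ξ k u v) :
    ∃ i, 1 ≤ i ∧ i ≤ k ∧ v = dilate (ξ ^ i) u := by
  rcases u with ((⟨x, y⟩ | m) | (⟨m, b⟩ | x)) <;>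
    rcases v with ((⟨x', y'⟩ | m') | (⟨m', b'⟩ | x')) <;> simp_all [HArc, Vtx.dilate]

lemma eq_one_of_hEdge_dilate_of_hEdge {a : Fˣ} {v w : Vtx F} (h₁ : HEdge (dilate a v) w)
    (h₂ : HEdge w v) : a = 1 := by
  rcases v with ((⟨x, y⟩ | m) | (⟨m, b⟩ | x)) <;>
    rcases w with ((⟨x', y'⟩ | m') | (⟨m', b'⟩ | x')) <;> simp_all [HEdge, Vtx.dilate]

lemma eq_and_eq_of_mul_add_eq_mul_add {K : Type} [Field K] {a b c d x x' : K} (hx : x ≠ x')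
    (h : a * x + b = c * x + d) (h' : a * x' + b = c * x' + d) : a = c ∧ b = d := by
  have hac : a = c := by
    have : (a - c) * (x - x') = 0 := by linear_combination h - h'
    simpa [sub_eq_zero, hx] using this
  subst hac
  exact ⟨rfl, add_left_cancel h⟩

lemma eq_of_hEdge_of_hEdge {u v w w' : Vtx F} (huv : u ≠ v) (h₁ : HEdge u w) (h₂ : HEdge w v)
    (h₃ : HEdge u w') (h₄ : HEdge w' v) : w = w' := by
  rcases u with ((⟨x, y⟩ | m) | (⟨m, b⟩ | x)) <;>
    rcases v with ((⟨x', y'⟩ | m') | (⟨m', b'⟩ | x')) <;>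
    rcases w with ((⟨x₁, y₁⟩ | m₁) | (⟨m₁, b₁⟩ | x₁)) <;>
    rcases w' with ((⟨x₂, y₂⟩ | m₂) | (⟨m₂, b₂⟩ | x₂)) <;> simp_all [HEdge]
  · obtain ⟨hm, hb⟩ := eq_and_eq_of_mul_add_eq_mul_add (Units.val_injective.ne huv) h₃ h₄
    exact ⟨Units.ext hm, hb⟩
  · have hx : x₁ = x₂ := by
      by_contra hx
      obtain ⟨hm, hb⟩ := eq_and_eq_of_mul_add_eq_mul_add (Units.val_injective.ne hx) h₂ h₄
      exact huv (Units.ext hm) hb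
    exact ⟨hx, congrArg _ hx⟩

lemma not_injective_of_hEdge_cycle_four {v : ZMod 4 → Vtx F}
    (hstep : ∀ t, HEdge (v t) (v (t + 1))) : ¬ Function.Injective v := by
  intro hinj
  have h02 : v 0 ≠ v 2 := hinj.ne (by decide)
  have h13 : v 1 ≠ v 3 := hinj.ne (by decide)
  exact h13 (eq_of_hEdge_of_hEdge h02 (hstep 0) (hstep 1) (hstep 3).symm (hstep 2).symm)

variable (F) in
def incidenceGraph : SimpleGraph (Vtx F) where
  Adj := HEdge
  symm := ⟨fun _ _ => HEdge.symm⟩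
  loopless := ⟨fun _ h => h.isLeft_ne rfl⟩

@[simp]
lemma incidenceGraph_adj {u v : Vtx F} : (incidenceGraph F).Adj u v ↔ HEdge u v := Iff.rfl

def dilateHom (a : Fˣ) : incidenceGraph F →g incidenceGraph F where
  toFun := dilate a
  map_rel' {_ _} (h : HEdge _ _) := h.dilate a

@[simp]
lemma dilateHom_apply (a : Fˣ) (v : Vtx F) : dilateHom a v = dilate a v := rfl

def isLeftColoring : (incidenceGraph F).Coloring Bool :=
  SimpleGraph.Coloring.mk Sum.isLeft fun (h : HEdge _ _) => h.isLeft_ne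

lemma even_length_walk_iff {u v : Vtx F} (p : (incidenceGraph F).Walk u v) :
    Even p.length ↔ u.isLeft = v.isLeft := by
  rw [isLeftColoring.even_length_iff_congr p, Bool.coe_iff_coe]
  rfl

lemma exists_walk_dilate_of_mixedWalk {ξ : Fˣ} {k : ℕ} (v : ℕ → Vtx F) (s : ℕ → Bool)
    (hstep : ∀ t, if s t then HArc ξ k (v t) (v (t + 1)) else HEdge (v t) (v (t + 1)))
    (t : ℕ) :
    ∃ N, Nat.count (fun j => s j) t ≤ N ∧ N ≤ k * Nat.count (fun j => s j) t ∧
      ∃ p : (incidenceGraph F).Walk (dilate (ξ ^ N) (v 0)) (v t),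
        p.length + Nat.count (fun j => s j) t = t := by
  induction t with
  | zero => exact ⟨0, le_rfl, by simp, by simp⟩
  | succ t ih =>
    obtain ⟨N, hlo, hhi, p, hp⟩ := ih
    have hs := hstep t
    rw [Nat.count_succ]
    cases h : s t
    · rw [h, if_neg Bool.false_ne_true] at hs
      refine ⟨N, by simpa using hlo, by simpa using hhi, p.concat (incidenceGraph_adj.mpr hs), ?_⟩
      simp
      omega
    · rw [h, if_pos rfl] at hs
      obtain ⟨i, hi1, hik, hv⟩ := hs.exists_eq_dilate
      refine ⟨i + N, by simp; omega, by simp; nlinarith, ?_⟩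
      have hu : dilateHom (ξ ^ i) (dilate (ξ ^ N) (v 0)) = dilate (ξ ^ (i + N)) (v 0) := by
        simp [pow_add, dilate_mul]
      have hv' : dilateHom (ξ ^ i) (v t) = v (t + 1) := hv.symm
      refine ⟨(p.map (dilateHom (ξ ^ i))).copy hu hv', ?_⟩
      rw [SimpleGraph.Walk.length_copy, SimpleGraph.Walk.length_map, if_pos rfl]
      omega

theorem five_le_of_isMixedCycle [Finite F] {ξ : Fˣ} {k ℓ : ℕ} (hξ : 4 * k < orderOf ξ)
    {f : ZMod ℓ → Vtx F} (hf : IsMixedCycle ξ k ℓ f) : 5 ≤ ℓ := by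
  obtain ⟨hinj, s, hstep, hs2⟩ := hf
  by_contra! hℓ
  have hℓ0 : ℓ ≠ 0 := by
    rintro rfl
    have : Finite ℤ := Finite.of_injective f hinj
    exact not_finite ℤ
  obtain ⟨N, hlo, hhi, p₀, hp₀⟩ := exists_walk_dilate_of_mixedWalk (ξ := ξ) (k := k)
    (fun j : ℕ => f j) (fun j => s j) (fun t => by simpa using hstep t) ℓ
  let p : (incidenceGraph F).Walk (dilate (ξ ^ N) (f 0)) (f 0) := p₀.copy (by simp) (by simp)
  set a := Nat.count (fun j => s j) ℓ
  have hp : p.length + a = ℓ := by simpa [p] using hp₀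
  have ha : a ≤ ℓ := Nat.count_le _
  obtain ⟨e, he⟩ := (even_length_walk_iff p).mpr (isLeft_dilate _ _)
  rcases Nat.eq_zero_or_pos a with ha0 | ha0
  · have : NeZero ℓ := ⟨hℓ0⟩
    have hedge : ∀ t : ZMod ℓ, s t = false := by
      have hlt : ∀ t : ℕ, t < ℓ → s t = false := by
        simpa [a, Nat.count_iff_forall_not] using ha0
      exact fun t => by simpa using hlt t.val t.val_lt
    have hedges : ∀ t, HEdge (f t) (f (t + 1)) := fun t => by simpa [hedge t] using hstep t
    rcases (by omega : ℓ = 2 ∨ ℓ = 4) with rfl | rfl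
    · simpa [hedge] using hs2 rfl
    · exact not_injective_of_hEdge_cycle_four hedges hinj
  · have hN : ξ ^ N ≠ 1 := pow_ne_one_of_lt_orderOf (by omega) (by nlinarith)
    rcases (by omega : p.length = 0 ∨ p.length = 2) with h0 | h2
    · exact hN (eq_one_of_dilate_eq_self (p.eq_of_length_eq_zero h0))
    · obtain ⟨h₁, h₂⟩ := (SimpleGraph.walkLengthTwoEquivCommonNeighbors _ _ _ ⟨p, h2⟩).prop
      exact hN (eq_one_of_hEdge_dilate_of_hEdge h₁ (HEdge.symm h₂))

theorem exists_isMixedCycle_five {ξ : Fˣ} {k : ℕ} (hξ : ξ ≠ 1) (hk : 1 ≤ k) :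
    ∃ f : ZMod 5 → Vtx F, IsMixedCycle ξ k 5 f := by
  refine ⟨![inr (inr 1), inr (inr ξ), inl (inl (ξ, 0)), inr (inl (1, -ξ)), inl (inl (1, 1 - ξ))],
    ?_, ![true, false, false, false, false], ?_, by decide⟩
  · intro u w huw
    fin_cases u <;> fin_cases w <;> simp_all [eq_comm] <;> rfl
  · intro t
    fin_cases t
    · exact ⟨1, le_rfl, hk, by simp⟩
    -- unfolding `ZMod 5` to `Fin 5` lets `simp` evaluate the entries `![…] (t + 1)`
    all_goals simp [HEdge, ZMod, sub_eq_add_neg]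

end IncidenceGraph

theorem Hq_girth_five_general (q k R : ℕ)
    (F : Type) [Field F] [Fintype F] (hcard : Fintype.card F = q)
    (ξ : Fˣ) (hξ : ∀ a : Fˣ, a ∈ Subgroup.zpowers ξ)
    (hk : 1 ≤ k) (hR1 : 1 ≤ R) (hqk : q - 1 = 4 * k + R) :
    (∀ (ℓ : ℕ) (f : ZMod ℓ → Vtx F), IsMixedCycle ξ k ℓ f → 5 ≤ ℓ) ∧
      ∃ f : ZMod 5 → Vtx F, IsMixedCycle ξ k 5 f := by
  have horder : orderOf ξ = q - 1 := by
    rw [orderOf_eq_card_of_forall_mem_zpowers hξ, Nat.card_units, Nat.card_eq_fintype_card, hcard]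
  have h4k : 4 * k < orderOf ξ := by omega
  refine ⟨fun ℓ f hf => five_le_of_isMixedCycle h4k hf, exists_isMixedCycle_five ?_ hk⟩
  simpa using pow_ne_one_of_lt_orderOf one_ne_zero (by omega : 1 < orderOf ξ)

/-- `H_q` has girth exactly 5: every mixed cycle has length at least 5, and a mixed
cycle of length 5 exists. -/
theorem Hq_girth_five (q k R : ℕ) (hq : IsPrimePow q)
    (F : Type) [Field F] [Fintype F] (hcard : Fintype.card F = q)
    (ξ : Fˣ) (hξ : ∀ a : Fˣ, a ∈ Subgroup.zpowers ξ)
    (hk : 1 ≤ k) (hR1 : 1 ≤ R) (hR5 : R ≤ 5) (hqk : q - 1 = 4 * k + R) :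
    (∀ (ℓ : ℕ) (f : ZMod ℓ → Vtx F), IsMixedCycle ξ k ℓ f → 5 ≤ ℓ) ∧
      ∃ f : ZMod 5 → Vtx F, IsMixedCycle ξ k 5 f :=
  Hq_girth_five_general q k R F hcard ξ hξ hk hR1 hqk
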